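/- Every strong round decomposable local tournament has at least two distinct Sullivan-1 vertices. -/

import Mathlib

/-- The out-neighbourhood of `x` in the digraph with arc relation `A`. -/
def Nplus {V : Type*} (A : V → V → Prop) (x : V) : Set V := {y | A x y}

/-- The in-neighbourhood of `x`. -/
def Nminus {V : Type*} (A : V → V → Prop) (x : V) : Set V := {y | A y x}

/-- The second out-neighbourhood of `x`:
`(⋃ u ∈ N⁺(x), N⁺(u)) \ N⁺(x)`. -/
def Nsecond {V : Type*} (A : V → V → Prop) (x : V) : Set V :=
  (⋃ u ∈ Nplus A x, Nplus A u) \ Nplus A x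

/-- Out-degree `d⁺(x)`. -/
noncomputable def dplus {V : Type*} (A : V → V → Prop) (x : V) : ℕ := (Nplus A x).ncard

/-- In-degree `d⁻(x)`. -/
noncomputable def dminus {V : Type*} (A : V → V → Prop) (x : V) : ℕ := (Nminus A x).ncard

/-- Second out-degree `d⁺⁺(x)`. -/
noncomputable def dsecond {V : Type*} (A : V → V → Prop) (x : V) : ℕ := (Nsecond A x).ncard

/-- `x` is a Sullivan-1 vertex: `d⁺⁺(x) ≥ d⁻(x)`. -/
def Sullivan1 {V : Type*} (A : V → V → Prop) (x : V) : Prop :=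
  dminus A x ≤ dsecond A x

/-- `x` is a Sullivan-2 vertex: `d⁺⁺(x) + d⁺(x) ≥ 2·d⁻(x)`. -/
def Sullivan2 {V : Type*} (A : V → V → Prop) (x : V) : Prop :=
  2 * dminus A x ≤ dsecond A x + dplus A x

/-- Two vertices are adjacent if there is an arc between them in some direction. -/
def Adjacent {V : Type*} (A : V → V → Prop) (x y : V) : Prop := A x y ∨ A y x

/-- An oriented graph: no loops and no 2-cycles. -/
def IsOriented {V : Type*} (A : V → V → Prop) : Prop :=
  (∀ x, ¬ A x x) ∧ ∀ x y, A x y → ¬ A y x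

/-- A local tournament: an oriented graph in which any two distinct out-neighbours
of a vertex are adjacent, and any two distinct in-neighbours are adjacent. -/
def IsLocalTournament {V : Type*} (A : V → V → Prop) : Prop :=
  IsOriented A ∧
  (∀ x y z, A x y → A x z → y ≠ z → Adjacent A y z) ∧
  (∀ x y z, A y x → A z x → y ≠ z → Adjacent A y z)

/-- A tournament: an oriented graph in which any two distinct vertices are adjacent. -/
def IsTournament {V : Type*} (A : V → V → Prop) : Prop :=
  IsOriented A ∧ ∀ x y : V, x ≠ y → Adjacent A x y

/-- A digraph is strong if every vertex can reach every other by a directed path. -/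
def IsStrong {V : Type*} (A : V → V → Prop) : Prop :=
  ∀ x y : V, Relation.ReflTransGen A x y

/-- A digraph on `ZMod r` is roundly labelled (by the natural labelling `0,1,…,r-1`)
if for each vertex `i` the out-neighbourhood is `{i+1, …, i+d⁺(i)}` and the
in-neighbourhood is `{i−d⁻(i), …, i−1}` (indices modulo `r`). -/
def IsRoundLabelling {r : ℕ} (B : ZMod r → ZMod r → Prop) : Prop :=
  ∀ i : ZMod r,
    Nplus B i = (fun t : ℕ => i + (t : ZMod r)) '' Set.Icc 1 (dplus B i) ∧
    Nminus B i = (fun t : ℕ => i - (t : ZMod r)) '' Set.Icc 1 (dminus B i)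

/-- A digraph is round if its vertices admit a round labelling. -/
def IsRound {V : Type*} (A : V → V → Prop) : Prop :=
  ∃ r : ℕ, 0 < r ∧ ∃ e : ZMod r ≃ V,
    IsRoundLabelling (fun i j => A (e i) (e j))

/-- A digraph `A` on `V` is round decomposable: `A = R[S₁,…,S_r]` where `R` is a
round local tournament on `r ≥ 2` vertices (realized on `ZMod r`), the parts are
the fibres of a surjection `φ : V → ZMod r` (so all parts are nonempty and pairwise
disjoint), arcs between distinct parts are exactly those induced by `R`, and each
part induces a strong tournament. -/
def IsRoundDecomposable {V : Type*} (A : V → V → Prop) : Prop :=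
  ∃ (r : ℕ) (B : ZMod r → ZMod r → Prop) (φ : V → ZMod r),
    2 ≤ r ∧ IsLocalTournament B ∧ IsRound B ∧ Function.Surjective φ ∧
    (∀ x y, φ x ≠ φ y → (A x y ↔ B (φ x) (φ y))) ∧
    (∀ x y, φ x = φ y → x ≠ y → Adjacent A x y) ∧
    (∀ i : ZMod r, ∀ x y, φ x = i → φ y = i →
      Relation.ReflTransGen (fun a b => A a b ∧ φ a = i ∧ φ b = i) x y)


/-!
Write `A = R[S_j]` with `R` round on `ZMod r`, and call a part `j` good if the parts dominating
`S_j` hold at most as many vertices as the parts dominated by `S_m`, where `m = j + d⁺(j)` is the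
last out-neighbour of `j`. A king of a good part is a Sullivan-1 vertex: its in-neighbours inside
`S_j`, and everything dominated by `S_m`, are second out-neighbours. Roundness makes every
in-neighbour of `m + d⁺(m) + 1` an out-neighbour of `m`, so a lightest part is good. A lightest part
with two vertices has two kings, and any other good part provides a second king. This leaves a
unique lightest part `i` with a single vertex, all other parts being bad. Then
`d⁺(i + 1) + d⁻(i) + 2 = r`, and the lightest in-neighbour `i - s` of `i` has `d⁺(i - s) ≤ s`,
whereas `d⁺(i - d⁻(i)) > d⁻(i)`; this contradicts the fact that `d⁺` drops by at most one per step.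
-/

open Function Set

theorem ZMod.natCast_ne_zero_of_lt {r t : ℕ} (h0 : 0 < t) (ht : t < r) : (t : ZMod r) ≠ 0 :=
  fun h => h0.ne' (Nat.eq_zero_of_dvd_of_lt ((ZMod.natCast_eq_zero_iff t r).1 h) ht)

theorem ZMod.natCast_inj_of_lt {r t s : ℕ} (ht : t < r) (hs : s < r) :
    (t : ZMod r) = s ↔ t = s := by
  rw [ZMod.natCast_eq_natCast_iff', Nat.mod_eq_of_lt ht, Nat.mod_eq_of_lt hs]

theorem ZMod.sub_natCast_eq_add_natCast_sub {r t : ℕ} (j : ZMod r) (ht : t ≤ r) :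
    j - t = j + ((r - t : ℕ) : ZMod r) := by
  rw [Nat.cast_sub ht, ZMod.natCast_self]
  ring

theorem Relation.ReflTransGen.exists_crossing {α : Type*} {R : α → α → Prop} {p : α → Prop}
    {x y : α} (h : Relation.ReflTransGen R x y) (hx : p x) (hy : ¬ p y) :
    ∃ u w, R u w ∧ p u ∧ ¬ p w := by
  induction h with
  | refl => exact absurd hx hy
  | @tail b c _ hbc ih =>
    by_cases hb : p b
    · exact ⟨b, c, hbc, hb, hy⟩
    · exact ih hb

theorem IsOriented.ne_of_adj {V : Type*} {A : V → V → Prop} (hA : IsOriented A) {x y : V}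
    (h : A x y) : x ≠ y := by
  rintro rfl
  exact hA.1 x h

theorem IsLocalTournament.comap {V W : Type*} {A : V → V → Prop} {f : W → V}
    (hA : IsLocalTournament A) (hf : Injective f) :
    IsLocalTournament (fun x y => A (f x) (f y)) :=
  ⟨⟨fun _ => hA.1.1 _, fun _ _ => hA.1.2 _ _⟩,
    fun _ _ _ h₁ h₂ hne => hA.2.1 _ _ _ h₁ h₂ (hf.ne hne),
    fun _ _ _ h₁ h₂ hne => hA.2.2 _ _ _ h₁ h₂ (hf.ne hne)⟩

noncomputable def lastOut {r : ℕ} (C : ZMod r → ZMod r → Prop) (j : ZMod r) : ZMod r :=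
  j + dplus C j

namespace IsRoundLabelling

variable {r : ℕ} {C : ZMod r → ZMod r → Prop}

theorem adj_iff_exists_add (hC : IsRoundLabelling C) {j k : ZMod r} :
    C j k ↔ ∃ t ∈ Icc 1 (dplus C j), j + t = k := by
  show k ∈ Nplus C j ↔ _
  rw [(hC j).1]
  rfl

theorem adj_iff_exists_sub (hC : IsRoundLabelling C) {j k : ZMod r} :
    C k j ↔ ∃ t ∈ Icc 1 (dminus C j), j - t = k := by
  show k ∈ Nminus C j ↔ _
  rw [(hC j).2]
  rfl

theorem nminus_add_one_subset (hC : IsRoundLabelling C) (j : ZMod r) :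
    Nminus C (j + 1) ⊆ insert j (Nminus C j) := by
  intro k h
  obtain ⟨t, ⟨ht1, ht⟩, hkt⟩ := hC.adj_iff_exists_add.1 h
  rcases ht1.eq_or_lt with rfl | ht1
  · exact .inl (by simpa using hkt)
  · refine .inr (hC.adj_iff_exists_add.2 ⟨t - 1, ⟨by omega, by omega⟩, ?_⟩)
    rw [Nat.cast_sub ht1.le, Nat.cast_one]
    linear_combination hkt

variable [NeZero r]

theorem dplus_lt (hC : IsRoundLabelling C) (hor : IsOriented C) (j : ZMod r) : dplus C j < r := by
  by_contra! h
  exact hor.1 j (hC.adj_iff_exists_add.2 ⟨r, ⟨NeZero.one_le, h⟩, by simp⟩)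

theorem dminus_lt (hC : IsRoundLabelling C) (hor : IsOriented C) (j : ZMod r) :
    dminus C j < r := by
  by_contra! h
  exact hor.1 j (hC.adj_iff_exists_sub.2 ⟨r, ⟨NeZero.one_le, h⟩, by simp⟩)

theorem adj_add_iff (hC : IsRoundLabelling C) (hor : IsOriented C) {j : ZMod r} {t : ℕ}
    (ht : t < r) : C j (j + t) ↔ 1 ≤ t ∧ t ≤ dplus C j := by
  refine ⟨fun h => ?_, fun h => hC.adj_iff_exists_add.2 ⟨t, h, rfl⟩⟩
  obtain ⟨s, hs, hst⟩ := hC.adj_iff_exists_add.1 h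
  rwa [← (ZMod.natCast_inj_of_lt (hs.2.trans_lt (hC.dplus_lt hor j)) ht).1
    ((add_right_inj j).1 hst)]

theorem sub_adj_iff (hC : IsRoundLabelling C) (hor : IsOriented C) {j : ZMod r} {t : ℕ}
    (ht : t < r) : C (j - t) j ↔ 1 ≤ t ∧ t ≤ dminus C j := by
  refine ⟨fun h => ?_, fun h => hC.adj_iff_exists_sub.2 ⟨t, h, rfl⟩⟩
  obtain ⟨s, hs, hst⟩ := hC.adj_iff_exists_sub.1 h
  rwa [← (ZMod.natCast_inj_of_lt (hs.2.trans_lt (hC.dminus_lt hor j)) ht).1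
    (sub_right_inj.1 hst)]

/-- Otherwise `j` would be an out-neighbour of its out-neighbour `j + t`. -/
theorem add_dplus_add_lt (hC : IsRoundLabelling C) (hor : IsOriented C) {j : ZMod r} {t : ℕ}
    (ht1 : 1 ≤ t) (ht : t ≤ dplus C j) : t + dplus C (j + t) < r := by
  have hj := hC.dplus_lt hor j
  by_contra! h
  refine hor.2 _ _ ((hC.adj_add_iff hor (by omega)).2 ⟨ht1, ht⟩) ?_
  have := (hC.adj_add_iff hor (j := j + t) (t := r - t) (by omega)).2 ⟨by omega, by omega⟩
  rwa [add_assoc, ← Nat.cast_add, Nat.add_sub_cancel' (by omega), ZMod.natCast_self,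
    add_zero] at this

end IsRoundLabelling

/-- A local tournament on `ZMod r`, roundly labelled by the identity, without sinks or sources
(for a round digraph this is the same as being strong, since then `j → j + 1` for all `j`). -/
structure IsStrongRoundLocalTournament {r : ℕ} (C : ZMod r → ZMod r → Prop) : Prop where
  localTournament : IsLocalTournament C
  round : IsRoundLabelling C
  one_le_dplus : ∀ j, 1 ≤ dplus C j
  one_le_dminus : ∀ j, 1 ≤ dminus C j

namespace IsStrongRoundLocalTournament

variable {r : ℕ} {C : ZMod r → ZMod r → Prop}

theorem isOriented (hC : IsStrongRoundLocalTournament C) : IsOriented C := hC.localTournament.1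

variable [NeZero r]

theorem dplus_add_one_lt (hC : IsStrongRoundLocalTournament C) (j : ZMod r) :
    dplus C j + 1 < r := by
  have := hC.round.add_dplus_add_lt hC.isOriented (hC.one_le_dplus j) le_rfl
  have := hC.one_le_dplus (j + dplus C j)
  omega

theorem adj_add_one (hC : IsStrongRoundLocalTournament C) (j : ZMod r) : C j (j + 1) := by
  have := hC.dplus_add_one_lt j
  simpa using (hC.round.adj_add_iff hC.isOriented (j := j) (t := 1) (by omega)).2
    ⟨le_rfl, hC.one_le_dplus j⟩

theorem add_one_ne (hC : IsStrongRoundLocalTournament C) (j : ZMod r) : j + 1 ≠ j :=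
  (hC.isOriented.ne_of_adj (hC.adj_add_one j)).symm

theorem adj_lastOut (hC : IsStrongRoundLocalTournament C) (j : ZMod r) : C j (lastOut C j) :=
  (hC.round.adj_add_iff hC.isOriented (hC.round.dplus_lt hC.isOriented j)).2
    ⟨hC.one_le_dplus j, le_rfl⟩

theorem ne_and_not_adj_of_lastOut_adj (hC : IsStrongRoundLocalTournament C) {j k : ZMod r}
    (hk : C (lastOut C j) k) : k ≠ j ∧ ¬ C j k := by
  obtain ⟨t, ⟨ht1, ht⟩, rfl⟩ := hC.round.adj_iff_exists_add.1 hk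
  have hj1 := hC.one_le_dplus j
  have hsum := hC.round.add_dplus_add_lt hC.isOriented hj1 le_rfl
  have hk : lastOut C j + t = j + (dplus C j + t : ℕ) := by
    rw [lastOut, Nat.cast_add, add_assoc]
  have ht' : t ≤ dplus C (j + dplus C j) := ht
  rw [hk, hC.round.adj_add_iff hC.isOriented (by omega)]
  exact ⟨fun h => ZMod.natCast_ne_zero_of_lt (by omega) (by omega) (add_eq_left.1 h), by omega⟩

theorem adj_of_adj_lastOut_add_one (hC : IsStrongRoundLocalTournament C) {j k : ZMod r}
    (hk : C k (lastOut C j + 1)) : C j k := by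
  have hj := hC.dplus_add_one_lt j
  have hv : lastOut C j + 1 = j + (dplus C j + 1 : ℕ) := by
    rw [lastOut, Nat.cast_add, Nat.cast_one, add_assoc]
  have hin : dminus C (lastOut C j + 1) ≤ dplus C j := by
    by_contra! h
    have := (hC.round.sub_adj_iff hC.isOriented (j := lastOut C j + 1) hj).2 ⟨by omega, h⟩
    rw [hv, add_sub_cancel_right, hC.round.adj_add_iff hC.isOriented hj] at this
    omega
  obtain ⟨s, ⟨hs1, hs2⟩, rfl⟩ := hC.round.adj_iff_exists_sub.1 hk
  have hks : lastOut C j + 1 - s = j + (dplus C j + 1 - s : ℕ) := by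
    rw [hv, Nat.cast_sub (by omega : s ≤ dplus C j + 1)]
    ring
  rw [hks, hC.round.adj_add_iff hC.isOriented (by omega)]
  exact ⟨by omega, by omega⟩

/-- The out-neighbours `j + 1` and `lastOut C j` of `j` are adjacent, and the arc cannot point
back to `j + 1`. -/
theorem dplus_le_dplus_add_one (hC : IsStrongRoundLocalTournament C) (j : ZMod r) :
    dplus C j ≤ dplus C (j + 1) + 1 := by
  by_cases h2 : dplus C j ≤ 1
  · omega
  have hj := hC.dplus_add_one_lt j
  have h1 := hC.adj_add_one j
  have hne : j + 1 ≠ lastOut C j := by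
    intro h
    rw [lastOut, ← Nat.cast_one, add_right_inj, ZMod.natCast_inj_of_lt (by omega) (by omega)] at h
    omega
  rcases hC.localTournament.2.1 j _ _ h1 (hC.adj_lastOut j) hne with h | h
  · have hsplit : lastOut C j = j + 1 + (dplus C j - 1 : ℕ) := by
      rw [lastOut, Nat.cast_sub (by omega), Nat.cast_one]
      ring
    rw [hsplit, hC.round.adj_add_iff hC.isOriented (by omega)] at h
    omega
  · exact absurd h1 (hC.ne_and_not_adj_of_lastOut_adj h).2

theorem dplus_le_add_dplus_add (hC : IsStrongRoundLocalTournament C) (j : ZMod r) (d : ℕ) :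
    dplus C j ≤ d + dplus C (j + d) := by
  induction d generalizing j with
  | zero => simp
  | succ d ih =>
    have := ih (j + 1)
    rw [show j + 1 + (d : ZMod r) = j + (d + 1 : ℕ) by push_cast; ring] at this
    have := hC.dplus_le_dplus_add_one j
    omega

end IsStrongRoundLocalTournament

noncomputable def inWeight {V : Type*} {r : ℕ} (C : ZMod r → ZMod r → Prop) (ψ : V → ZMod r)
    (j : ZMod r) : ℕ :=
  (ψ ⁻¹' Nminus C j).ncard

noncomputable def outWeight {V : Type*} {r : ℕ} (C : ZMod r → ZMod r → Prop) (ψ : V → ZMod r)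
    (j : ZMod r) : ℕ :=
  (ψ ⁻¹' Nplus C j).ncard

theorem ncard_preimage_insert_le {V W : Type*} [Finite V] (ψ : V → W) (j : W) (s : Set W) :
    (ψ ⁻¹' insert j s).ncard ≤ (ψ ⁻¹' s).ncard + (ψ ⁻¹' {j}).ncard := by
  rw [insert_eq, preimage_union, add_comm]
  exact ncard_union_le _ _

theorem Function.Surjective.eq_of_subset_of_ncard_preimage_le {V W : Type*} [Finite V]
    {ψ : V → W} (hψ : Surjective ψ) {s t : Set W} (hst : s ⊆ t)
    (h : (ψ ⁻¹' t).ncard ≤ (ψ ⁻¹' s).ncard) : s = t :=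
  hψ.preimage_injective (eq_of_subset_of_ncard_le (preimage_mono hst) h)

namespace IsStrongRoundLocalTournament

variable {r : ℕ} [NeZero r] {C : ZMod r → ZMod r → Prop} {V : Type*} [Finite V]
  {ψ : V → ZMod r}

theorem inWeight_lastOut_lastOut_add_one_le (hC : IsStrongRoundLocalTournament C) (j : ZMod r) :
    inWeight C ψ (lastOut C (lastOut C j) + 1) ≤ outWeight C ψ (lastOut C j) :=
  ncard_le_ncard (preimage_mono fun _ hk => hC.adj_of_adj_lastOut_add_one hk)

theorem inWeight_le_outWeight_lastOut_of_forall_le (hC : IsStrongRoundLocalTournament C)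
    {j : ZMod r} (hj : ∀ k, inWeight C ψ j ≤ inWeight C ψ k) :
    inWeight C ψ j ≤ outWeight C ψ (lastOut C j) :=
  (hj _).trans (hC.inWeight_lastOut_lastOut_add_one_le j)

theorem nminus_add_one_eq (hC : IsStrongRoundLocalTournament C) (hψ : Surjective ψ) {i : ZMod r}
    (hone : (ψ ⁻¹' {i}).ncard = 1) (hmin : ∀ j ≠ i, inWeight C ψ i < inWeight C ψ j) :
    Nminus C (i + 1) = insert i (Nminus C i) := by
  refine hψ.eq_of_subset_of_ncard_preimage_le (hC.round.nminus_add_one_subset i) ?_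
  have := hmin _ (hC.add_one_ne i)
  have := ncard_preimage_insert_le ψ i (Nminus C i)
  unfold inWeight at *
  omega

theorem dplus_add_one_add_dminus (hC : IsStrongRoundLocalTournament C) (hψ : Surjective ψ)
    {i : ZMod r} (hone : (ψ ⁻¹' {i}).ncard = 1)
    (hmin : ∀ j ≠ i, inWeight C ψ i < inWeight C ψ j)
    (hbad : ∀ j ≠ i, outWeight C ψ (lastOut C j) < inWeight C ψ j) :
    dplus C (i + 1) + dminus C i + 2 = r := by
  have hW : inWeight C ψ (i + 1) ≤ inWeight C ψ i + 1 := by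
    rw [← hone]
    exact (ncard_le_ncard (preimage_mono (hC.round.nminus_add_one_subset i))).trans
      (ncard_preimage_insert_le ψ i _)
  have hbad₁ := hbad _ (hC.add_one_ne i)
  have hlast := hC.inWeight_lastOut_lastOut_add_one_le (ψ := ψ) (i + 1)
  have hζ : lastOut C (lastOut C (i + 1)) + 1 = i := by
    by_contra h
    have := hmin _ h
    omega
  have hsum : dplus C (i + 1) + dplus C (lastOut C (i + 1)) < r :=
    hC.round.add_dplus_add_lt hC.isOriented (hC.one_le_dplus (i + 1)) le_rfl
  have hr : dplus C (i + 1) + dplus C (lastOut C (i + 1)) + 2 = r := by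
    have := hC.one_le_dplus (i + 1)
    refine Nat.eq_of_dvd_of_lt_two_mul (by omega) ((ZMod.natCast_eq_zero_iff _ _).1 ?_) (by omega)
    have hζ' := hζ
    rw [lastOut] at hζ'
    have hl : lastOut C (i + 1) = i + 1 + dplus C (i + 1) := rfl
    push_cast
    linear_combination hζ' - hl
  have hsub : Nminus C i ⊆ Nplus C (lastOut C (i + 1)) := fun k hk =>
    hC.adj_of_adj_lastOut_add_one (by rwa [← hζ] at hk)
  rw [hζ] at hlast
  have heq := hψ.eq_of_subset_of_ncard_preimage_le hsub (by unfold inWeight outWeight at *; omega)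
  have : dminus C i = dplus C (lastOut C (i + 1)) := by rw [dminus, dplus, heq]
  omega

theorem dminus_add_one_le_dplus_sub_dminus (hC : IsStrongRoundLocalTournament C)
    (hψ : Surjective ψ) {i : ZMod r} (hone : (ψ ⁻¹' {i}).ncard = 1)
    (hmin : ∀ j ≠ i, inWeight C ψ i < inWeight C ψ j) (hr : dplus C (i + 1) + dminus C i + 2 = r) :
    dminus C i + 1 ≤ dplus C (i - dminus C i) := by
  have hk : C (i - dminus C i) (i + 1) := by
    change _ ∈ Nminus C (i + 1)
    rw [hC.nminus_add_one_eq hψ hone hmin]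
    exact .inr ((hC.round.sub_adj_iff hC.isOriented (by omega)).2 ⟨hC.one_le_dminus i, le_rfl⟩)
  have hi : i + 1 = i - dminus C i + (dminus C i + 1 : ℕ) := by
    push_cast
    ring
  rw [hi, hC.round.adj_add_iff hC.isOriented (by omega)] at hk
  exact hk.2

theorem exists_inWeight_sub_lt (hC : IsStrongRoundLocalTournament C) {i : ZMod r}
    (hbad : ∀ j ≠ i, outWeight C ψ (lastOut C j) < inWeight C ψ j)
    (hr : dplus C (i + 1) + dminus C i + 2 = r) {s : ℕ} (hs1 : 1 ≤ s) (hs : s ≤ dminus C i)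
    (hsa : s < dplus C (i - s)) :
    ∃ s', s ≤ s' ∧ s' ≤ dminus C i ∧ inWeight C ψ (i - s') < inWeight C ψ (i - s) := by
  obtain ⟨δ, hδ⟩ : ∃ δ, dplus C (i - s) = s + δ := ⟨_, (Nat.add_sub_cancel' hsa.le).symm⟩
  have hm : lastOut C (i - s) = i + δ := by
    rw [lastOut, hδ]
    push_cast
    ring
  have hsum : dplus C (i - s) + dplus C (lastOut C (i - s)) < r :=
    hC.round.add_dplus_add_lt hC.isOriented (hC.one_le_dplus _) le_rfl
  rw [hm] at hsum
  have hchain := hC.dplus_le_add_dplus_add (i + 1) (δ - 1)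
  rw [show i + 1 + ((δ - 1 : ℕ) : ZMod r) = i + δ by
    push_cast [Nat.cast_sub (by omega : 1 ≤ δ)]; ring] at hchain
  obtain ⟨s', hs'⟩ : ∃ s', s' + (δ + dplus C (i + δ) + 1) = r := ⟨_, Nat.sub_add_cancel (by omega)⟩
  refine ⟨s', by omega, by omega, ?_⟩
  have hζ : lastOut C (lastOut C (i - s)) + 1 = i - s' := by
    rw [lastOut, hm, ZMod.sub_natCast_eq_add_natCast_sub i (by omega : s' ≤ r),
      show r - s' = δ + dplus C (i + δ) + 1 by omega]
    push_cast
    ring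
  calc inWeight C ψ (i - s') = inWeight C ψ (lastOut C (lastOut C (i - s)) + 1) := by rw [hζ]
    _ ≤ outWeight C ψ (lastOut C (i - s)) := hC.inWeight_lastOut_lastOut_add_one_le _
    _ < inWeight C ψ (i - s) :=
      hbad _ fun h => ZMod.natCast_ne_zero_of_lt hs1 (by omega) (sub_eq_self.1 h)

theorem exists_ne_inWeight_le_outWeight_lastOut (hC : IsStrongRoundLocalTournament C)
    (hψ : Surjective ψ) {i : ZMod r} (hone : (ψ ⁻¹' {i}).ncard = 1)
    (hmin : ∀ j ≠ i, inWeight C ψ i < inWeight C ψ j) :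
    ∃ j ≠ i, inWeight C ψ j ≤ outWeight C ψ (lastOut C j) := by
  by_contra! hbad
  have hr := hC.dplus_add_one_add_dminus hψ hone hmin hbad
  obtain ⟨s, hs, hsmin⟩ := Finset.exists_min_image (Finset.Icc 1 (dminus C i))
    (fun s : ℕ => inWeight C ψ (i - s)) ⟨1, Finset.mem_Icc.2 ⟨le_rfl, hC.one_le_dminus i⟩⟩
  rw [Finset.mem_Icc] at hs
  have has : dplus C (i - s) ≤ s := by
    by_contra! h
    obtain ⟨s', hss', hs', hlt⟩ := hC.exists_inWeight_sub_lt hbad hr hs.1 hs.2 h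
    exact (hsmin s' (Finset.mem_Icc.2 ⟨by omega, hs'⟩)).not_gt hlt
  have hchain := hC.dplus_le_add_dplus_add (i - dminus C i) (dminus C i - s)
  rw [show i - dminus C i + ((dminus C i - s : ℕ) : ZMod r) = i - s by
    push_cast [Nat.cast_sub hs.2]; ring] at hchain
  have := hC.dminus_add_one_le_dplus_sub_dminus hψ hone hmin hr
  omega

end IsStrongRoundLocalTournament

section Kings

variable {V : Type*} {A : V → V → Prop} {T : Set V}

/-- `x` is a king of `T`: it reaches every vertex of `T` within `T` in at most two steps. -/
def IsKingOf (A : V → V → Prop) (T : Set V) (x : V) : Prop :=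
  x ∈ T ∧ ∀ v ∈ T, A v x → ∃ u ∈ T, A x u ∧ A u v

/-- Landau: a vertex of maximum out-degree inside `T` is a king of `T`. -/
theorem exists_isKingOf (hA : IsOriented A) (hT : T.Finite) (hne : T.Nonempty)
    (hadj : ∀ u ∈ T, ∀ v ∈ T, u ≠ v → Adjacent A u v) : ∃ x, IsKingOf A T x := by
  obtain ⟨x, hxT, hmax⟩ := exists_max_image T (fun x => {u ∈ T | A x u}.ncard) hT hne
  refine ⟨x, hxT, fun v hvT hvx => ?_⟩
  by_contra! hcon
  have hsub : insert x {u ∈ T | A x u} ⊆ {u ∈ T | A v u} := by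
    rintro u (rfl | ⟨huT, hxu⟩)
    · exact ⟨hxT, hvx⟩
    · have huv : u ≠ v := by
        rintro rfl
        exact hA.2 _ _ hxu hvx
      exact ⟨huT, (hadj u huT v hvT huv).resolve_left (hcon u huT hxu)⟩
  have := ncard_le_ncard hsub (hT.subset (sep_subset _ _))
  rw [ncard_insert_of_notMem (fun h => hA.1 x h.2) (hT.subset (sep_subset _ _))] at this
  exact (hmax v hvT).not_gt this

/-- The second king is a king of the in-neighbourhood in `T` of the first one. -/
theorem exists_two_isKingOf (hA : IsOriented A) (hT : T.Finite) (hne : T.Nonempty)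
    (hadj : ∀ u ∈ T, ∀ v ∈ T, u ≠ v → Adjacent A u v) (hin : ∀ x ∈ T, ∃ v ∈ T, A v x) :
    ∃ x y, x ≠ y ∧ IsKingOf A T x ∧ IsKingOf A T y := by
  obtain ⟨x, hx⟩ := exists_isKingOf hA hT hne hadj
  obtain ⟨y, ⟨hyT, hyx⟩, hy⟩ := exists_isKingOf hA (hT.subset (sep_subset T (A · x)))
    (hin x hx.1) fun u hu v hv => hadj u hu.1 v hv.1
  refine ⟨x, y, fun h => hA.1 x (h ▸ hyx), hx, hyT, fun v hvT hvy => ?_⟩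
  by_cases hvx : A v x
  · obtain ⟨u, hu, h₁, h₂⟩ := hy v ⟨hvT, hvx⟩ hvy
    exact ⟨u, hu.1, h₁, h₂⟩
  · have hvx' : v ≠ x := by
      rintro rfl
      exact hA.2 _ _ hyx hvy
    exact ⟨x, hx.1, hyx, (hadj v hvT x hx.1 hvx').resolve_left hvx⟩

end Kings

theorem nplus_nonempty_of_isStrong {V W : Type*} {A : V → V → Prop} {C : W → W → Prop}
    {ψ : V → W} (hstrong : IsStrong A) (hadj : ∀ x y, ψ x ≠ ψ y → (A x y ↔ C (ψ x) (ψ y)))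
    {x y : V} (hxy : ψ x ≠ ψ y) : (Nplus C (ψ x)).Nonempty := by
  obtain ⟨u, w, huw, hu, hw⟩ := (hstrong x y).exists_crossing (p := (ψ · = ψ x)) rfl hxy.symm
  refine ⟨ψ w, ?_⟩
  rw [← hu]
  exact (hadj u w (by rw [hu]; exact Ne.symm hw)).1 huw

theorem nminus_nonempty_of_isStrong {V W : Type*} {A : V → V → Prop} {C : W → W → Prop}
    {ψ : V → W} (hstrong : IsStrong A) (hadj : ∀ x y, ψ x ≠ ψ y → (A x y ↔ C (ψ x) (ψ y)))
    {x y : V} (hxy : ψ x ≠ ψ y) : (Nminus C (ψ y)).Nonempty := by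
  obtain ⟨u, w, huw, hu, hw⟩ := (hstrong x y).exists_crossing (p := (ψ · ≠ ψ y)) hxy (by simp)
  rw [not_ne_iff] at hw
  refine ⟨ψ u, ?_⟩
  rw [← hw]
  exact (hadj u w (by rwa [hw])).1 huw

/-- `A` is the composition of `C` with the parts `ψ ⁻¹' {j}`, each strongly connected and
semicomplete. -/
structure IsStrongRoundComposition {V : Type*} {r : ℕ} (A : V → V → Prop)
    (C : ZMod r → ZMod r → Prop) (ψ : V → ZMod r) : Prop where
  quotient : IsStrongRoundLocalTournament C
  surjective : Surjective ψ
  adj_iff : ∀ x y, ψ x ≠ ψ y → (A x y ↔ C (ψ x) (ψ y))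
  part_adjacent : ∀ j, ∀ u ∈ ψ ⁻¹' {j}, ∀ v ∈ ψ ⁻¹' {j}, u ≠ v → Adjacent A u v
  part_strong : ∀ j x y, ψ x = j → ψ y = j →
    Relation.ReflTransGen (fun a b => A a b ∧ ψ a = j ∧ ψ b = j) x y

theorem IsRoundDecomposable.exists_isStrongRoundComposition {V : Type*} {A : V → V → Prop}
    (hrd : IsRoundDecomposable A) (hstrong : IsStrong A) :
    ∃ (r : ℕ) (_ : NeZero r) (C : ZMod r → ZMod r → Prop) (ψ : V → ZMod r),
      IsStrongRoundComposition A C ψ := by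
  obtain ⟨r, B, φ, hr, hB, ⟨r', -, e, hlab⟩, hφ, harc, hpart, hstr⟩ := hrd
  have : NeZero r := ⟨by omega⟩
  obtain rfl : r = r' := by simpa using (Nat.card_congr e).symm
  set C : ZMod r → ZMod r → Prop := fun i j => B (e i) (e j)
  set ψ : V → ZMod r := fun x => e.symm (φ x)
  have hψ (x : V) (j : ZMod r) : ψ x = j ↔ φ x = e j := e.symm_apply_eq
  have hsurj : Surjective ψ := e.symm.surjective.comp hφ
  have hadj (x y : V) (h : ψ x ≠ ψ y) : A x y ↔ C (ψ x) (ψ y) := by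
    simpa [C, ψ] using harc x y fun h' => h (by simp [ψ, h'])
  have hother (x : V) : ∃ y, ψ x ≠ ψ y := by
    obtain ⟨y, hy⟩ := hsurj (ψ x + 1)
    refine ⟨y, fun h => ZMod.natCast_ne_zero_of_lt (r := r) one_pos hr ?_⟩
    rw [hy, eq_comm, add_eq_left] at h
    exact_mod_cast h
  refine ⟨r, this, C, ψ, ⟨hB.comap e.injective, hlab, fun j => ?_, fun j => ?_⟩, hsurj, hadj,
    fun j u hu v hv huv => hpart u v (((hψ u j).1 hu).trans ((hψ v j).1 hv).symm) huv,
    fun j x y hx hy => ?_⟩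
  · obtain ⟨x, rfl⟩ := hsurj j
    obtain ⟨y, hy⟩ := hother x
    exact (ncard_pos).2 (nplus_nonempty_of_isStrong hstrong hadj hy)
  · obtain ⟨y, rfl⟩ := hsurj j
    obtain ⟨x, hx⟩ := hother y
    exact (ncard_pos).2 (nminus_nonempty_of_isStrong hstrong hadj hx.symm)
  · refine Relation.ReflTransGen.mono (fun a b h => ?_) x y
      (hstr (e j) x y ((hψ x j).1 hx) ((hψ y j).1 hy))
    exact ⟨h.1, (hψ a j).2 h.2.1, (hψ b j).2 h.2.2⟩

namespace IsStrongRoundComposition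

variable {V : Type*} {A : V → V → Prop} {r : ℕ} {C : ZMod r → ZMod r → Prop} {ψ : V → ZMod r}

theorem nminus_eq (hD : IsStrongRoundComposition A C ψ) (x : V) :
    Nminus A x = {v | ψ v = ψ x ∧ A v x} ∪ ψ ⁻¹' Nminus C (ψ x) := by
  ext v
  by_cases hv : ψ v = ψ x
  · simp [Nminus, hv, hD.quotient.isOriented.1 (ψ x)]
  · simp [Nminus, hv, hD.adj_iff v x hv]

theorem exists_adj_of_two_le_ncard (hD : IsStrongRoundComposition A C ψ) {j : ZMod r}
    (h : 2 ≤ (ψ ⁻¹' {j}).ncard) : ∀ x ∈ ψ ⁻¹' {j}, ∃ v ∈ ψ ⁻¹' {j}, A v x := by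
  intro x hx
  obtain ⟨y, hy, hyx⟩ := exists_ne_of_one_lt_ncard h x
  rcases (hD.part_strong j y x hy hx).cases_tail with rfl | ⟨v, -, hvx, hv, -⟩
  · exact absurd rfl hyx
  · exact ⟨v, hv, hvx⟩

variable [NeZero r]

theorem union_subset_nsecond (hD : IsStrongRoundComposition A C ψ) (hA : IsOriented A)
    {j : ZMod r} {x : V} (hx : IsKingOf A (ψ ⁻¹' {j}) x) :
    {v | ψ v = j ∧ A v x} ∪ ψ ⁻¹' Nplus C (lastOut C j) ⊆ Nsecond A x := by
  obtain ⟨hxj, hking⟩ := hx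
  have hxj : ψ x = j := hxj
  rintro v (⟨hvj, hvx⟩ | hv)
  · obtain ⟨u, -, hxu, huv⟩ := hking v hvj hvx
    exact ⟨mem_biUnion hxu huv, fun hxv => hA.2 _ _ hxv hvx⟩
  have hC := hD.quotient
  have hv : C (lastOut C j) (ψ v) := hv
  obtain ⟨u, hu⟩ := hD.surjective (lastOut C j)
  have hjv := hC.ne_and_not_adj_of_lastOut_adj hv
  have hxu : A x u := by
    have := hC.adj_lastOut j
    rwa [hD.adj_iff x u (by rw [hxj, hu]; exact hC.isOriented.ne_of_adj this), hxj, hu]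
  have huv : A u v := by
    rwa [hD.adj_iff u v (by rw [hu]; exact hC.isOriented.ne_of_adj hv), hu]
  refine ⟨mem_biUnion hxu huv, fun hxv => hjv.2 ?_⟩
  change A x v at hxv
  rwa [hD.adj_iff x v (by rw [hxj]; exact hjv.1.symm), hxj] at hxv

theorem sullivan1_of_isKingOf [Finite V] (hD : IsStrongRoundComposition A C ψ) (hA : IsOriented A)
    {j : ZMod r} {x : V} (hx : IsKingOf A (ψ ⁻¹' {j}) x)
    (hj : inWeight C ψ j ≤ outWeight C ψ (lastOut C j)) : Sullivan1 A x := by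
  have hxj : ψ x = j := hx.1
  set In := {v | ψ v = j ∧ A v x}
  have hdisj₁ : Disjoint In (ψ ⁻¹' Nminus C j) := disjoint_left.2 fun v hv hv' =>
    hD.quotient.isOriented.ne_of_adj (show C (ψ v) j from hv') hv.1
  have hdisj₂ : Disjoint In (ψ ⁻¹' Nplus C (lastOut C j)) := disjoint_left.2 fun v hv hv' =>
    (hD.quotient.ne_and_not_adj_of_lastOut_adj hv').1 hv.1
  calc dminus A x = In.ncard + inWeight C ψ j := by
        rw [dminus, hD.nminus_eq, hxj, ncard_union_eq hdisj₁]
        rfl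
    _ ≤ In.ncard + outWeight C ψ (lastOut C j) := by omega
    _ = (In ∪ ψ ⁻¹' Nplus C (lastOut C j)).ncard := (ncard_union_eq hdisj₂).symm
    _ ≤ dsecond A x := ncard_le_ncard (hD.union_subset_nsecond hA hx)

end IsStrongRoundComposition

/-- Every strong round decomposable local tournament has at least two distinct
Sullivan-1 vertices. -/
theorem strong_round_decomposable_two_sullivan1 {V : Type*} [Fintype V]
    (A : V → V → Prop) (hA : IsLocalTournament A)
    (hrd : IsRoundDecomposable A) (hstrong : IsStrong A) :
    ∃ x y : V, x ≠ y ∧ Sullivan1 A x ∧ Sullivan1 A y := by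
  obtain ⟨r, _, C, ψ, hD⟩ := hrd.exists_isStrongRoundComposition hstrong
  have king (j : ZMod r) : ∃ x, IsKingOf A (ψ ⁻¹' {j}) x :=
    exists_isKingOf hA.1 (toFinite _) (hD.surjective j) (hD.part_adjacent j)
  obtain ⟨i, hi⟩ := Finite.exists_min (inWeight C ψ)
  have hgood := hD.quotient.inWeight_le_outWeight_lastOut_of_forall_le hi
  by_cases hbig : 2 ≤ (ψ ⁻¹' {i}).ncard
  · obtain ⟨x, y, hxy, hx, hy⟩ := exists_two_isKingOf hA.1 (toFinite _) (hD.surjective i)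
      (hD.part_adjacent i) (hD.exists_adj_of_two_le_ncard hbig)
    exact ⟨x, y, hxy, hD.sullivan1_of_isKingOf hA.1 hx hgood,
      hD.sullivan1_of_isKingOf hA.1 hy hgood⟩
  obtain ⟨j, hji, hj⟩ : ∃ j ≠ i, inWeight C ψ j ≤ outWeight C ψ (lastOut C j) := by
    by_cases huniq : ∀ j ≠ i, inWeight C ψ i < inWeight C ψ j
    · have := (ncard_pos (toFinite (ψ ⁻¹' {i}))).2 (hD.surjective i)
      exact hD.quotient.exists_ne_inWeight_le_outWeight_lastOut hD.surjective (by omega) huniq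
    push Not at huniq
    obtain ⟨j, hji, hij⟩ := huniq
    exact ⟨j, hji,
      hD.quotient.inWeight_le_outWeight_lastOut_of_forall_le fun k => hij.trans (hi k)⟩
  obtain ⟨x, hx⟩ := king i
  obtain ⟨y, hy⟩ := king j
  refine ⟨x, y, ?_, hD.sullivan1_of_isKingOf hA.1 hx hgood, hD.sullivan1_of_isKingOf hA.1 hy hj⟩
  rintro rfl
  exact hji (hy.1.symm.trans hx.1)
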